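/- For every integer p ≥ 1 and every ε > 0 there exists N such that for all n ≥ N: if G is a C5-free simple graph on n vertices with e_p(G) = ex_p(n, C_5) (i.e., G maximizes e_p among C5-free graphs on n vertices), then the maximum degree of G satisfies Δ(G) ≥ (1/2 - ε)·n. -/

import Mathlib

/-- A graph is `C5`-free if it contains no cycle of length 5 as a subgraph. -/
def C5Free {V : Type*} (G : SimpleGraph V) : Prop :=
  ¬ ∃ v : Fin 5 → V, Function.Injective v ∧ ∀ i : Fin 5, G.Adj (v i) (v (i + 1))

/-- The sum of the `p`-th powers of the degrees of a finite graph. -/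
noncomputable def ep {V : Type*} [Fintype V] (G : SimpleGraph V) (p : ℕ) : ℕ :=
  letI : DecidableRel G.Adj := fun _ _ => Classical.dec _
  ∑ v, G.degree v ^ p

/-- `exP n p` is the maximum of `ep G p` over all `C5`-free graphs on `n` vertices. -/
noncomputable def exP (n p : ℕ) : ℕ :=
  sSup {m | ∃ G : SimpleGraph (Fin n), C5Free G ∧ ep G p = m}

/-- The maximum degree of a finite graph. -/
noncomputable def maxDeg {V : Type*} [Fintype V] (G : SimpleGraph V) : ℕ :=
  letI : DecidableRel G.Adj := fun _ _ => Classical.dec _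
  G.maxDegree

/-!
A complete bipartite graph with parts of sizes `⌊n/2⌋` and `⌈n/2⌉` has no odd cycle, hence is
`C₅`-free, and all its degrees are at least `⌊n/2⌋`; so `ex_p(n, C₅) ≥ n ⌊n/2⌋^p`. On the other
hand `e_p(G) ≤ n Δ(G)^p` for every graph, so an extremal graph has `Δ(G) ≥ ⌊n/2⌋`.
-/

open Finset SimpleGraph Filter

variable {V : Type*}

theorem C5Free.of_colorable_two {G : SimpleGraph V} (hG : G.Colorable 2) : C5Free G := by
  obtain ⟨c⟩ := hG
  rintro ⟨v, -, hadj⟩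
  have no_proper_two_coloring : ∀ g : Fin 5 → Fin 2, ∃ i, g i = g (i + 1) := by decide
  obtain ⟨i, hi⟩ := no_proper_two_coloring (c ∘ v)
  exact c.valid (hadj i) hi

section Degrees

variable [Fintype V] (G : SimpleGraph V) (p : ℕ)

theorem ep_le_card_mul_maxDeg_pow : ep G p ≤ Fintype.card V * maxDeg G ^ p := by
  classical
  calc ep G p = ∑ v, G.degree v ^ p := by unfold ep; congr!
    _ ≤ ∑ _v : V, G.maxDegree ^ p := by gcongr with v; exact G.degree_le_maxDegree v
    _ = Fintype.card V * maxDeg G ^ p := by simp [maxDeg]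

theorem card_mul_pow_le_ep [DecidableRel G.Adj] {k : ℕ} (hk : ∀ v, k ≤ G.degree v) :
    Fintype.card V * k ^ p ≤ ep G p := by
  calc Fintype.card V * k ^ p = ∑ _v : V, k ^ p := by simp
    _ ≤ ∑ v, G.degree v ^ p := by gcongr with v; exact hk v
    _ = ep G p := by unfold ep; congr!

end Degrees

theorem ep_le_exP {n p : ℕ} {G : SimpleGraph (Fin n)} (hG : C5Free G) : ep G p ≤ exP n p :=
  le_csSup ((Set.finite_range fun H : SimpleGraph (Fin n) => ep H p).subset
    (by rintro _ ⟨H, -, rfl⟩; exact ⟨H, rfl⟩)).bddAbove ⟨G, hG, rfl⟩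

section CompleteBipartite

variable [DecidableEq V] (s : Finset V)

def completeBipartiteOn : SimpleGraph V := (⊤ : SimpleGraph Bool).comap fun v => decide (v ∈ s)

theorem completeBipartiteOn_colorable_two : (completeBipartiteOn s).Colorable 2 :=
  Coloring.colorable (Hom.comap _ ⊤ : (completeBipartiteOn s).Coloring Bool)

instance : DecidableRel (completeBipartiteOn s).Adj := fun u v =>
  inferInstanceAs (Decidable (decide (u ∈ s) ≠ decide (v ∈ s)))

variable [Fintype V]

theorem neighborFinset_completeBipartiteOn (v : V) :
    (completeBipartiteOn s).neighborFinset v = if v ∈ s then sᶜ else s := by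
  ext u
  rw [mem_neighborFinset]
  by_cases hv : v ∈ s <;> by_cases hu : u ∈ s <;> simp [completeBipartiteOn, hv, hu]

theorem le_degree_completeBipartiteOn (hs : 2 * #s ≤ Fintype.card V) (v : V) :
    #s ≤ (completeBipartiteOn s).degree v := by
  rw [← card_neighborFinset_eq_degree, neighborFinset_completeBipartiteOn]
  split_ifs
  · rw [card_compl]; omega
  · rfl

end CompleteBipartite

theorem card_mul_div_two_pow_le_exP (n p : ℕ) : n * (n / 2) ^ p ≤ exP n p := by
  obtain ⟨s, -, hs⟩ := exists_subset_card_eq (s := (univ : Finset (Fin n))) (n := n / 2)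
    (by rw [card_univ, Fintype.card_fin]; omega)
  calc n * (n / 2) ^ p = Fintype.card (Fin n) * #s ^ p := by rw [hs, Fintype.card_fin]
    _ ≤ ep (completeBipartiteOn s) p := card_mul_pow_le_ep _ _
      (le_degree_completeBipartiteOn s (by rw [hs, Fintype.card_fin]; omega))
    _ ≤ exP n p := ep_le_exP (.of_colorable_two (completeBipartiteOn_colorable_two s))

theorem div_two_le_maxDeg_of_ep_eq_exP {n p : ℕ} (hp : p ≠ 0) {G : SimpleGraph (Fin n)}
    (hG : ep G p = exP n p) : n / 2 ≤ maxDeg G := by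
  rcases n.eq_zero_or_pos with rfl | hn
  · simp
  have h := calc n * (n / 2) ^ p ≤ exP n p := card_mul_div_two_pow_le_exP n p
    _ = ep G p := hG.symm
    _ ≤ n * maxDeg G ^ p := by simpa using ep_le_card_mul_maxDeg_pow G p
  exact (Nat.pow_le_pow_iff_left hp).1 (Nat.le_of_mul_le_mul_left h hn)

theorem eventually_half_sub_mul_le_div_two {ε : ℝ} (hε : 0 < ε) :
    ∀ᶠ n : ℕ in atTop, (1 / 2 - ε) * n ≤ ((n / 2 : ℕ) : ℝ) := by
  filter_upwards [tendsto_natCast_atTop_atTop.eventually_ge_atTop (1 / ε)] with n hn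
  have hεn : 1 ≤ ε * n := by rwa [div_le_iff₀' hε] at hn
  have hfloor : (n : ℝ) ≤ 2 * ((n / 2 : ℕ) : ℝ) + 1 := by
    exact_mod_cast (by omega : n ≤ 2 * (n / 2) + 1)
  linarith

theorem stmt2 (p : ℕ) (hp : 1 ≤ p) (ε : ℝ) (hε : 0 < ε) :
    ∃ N : ℕ, ∀ n : ℕ, N ≤ n → ∀ G : SimpleGraph (Fin n), C5Free G →
      ep G p = exP n p → (1/2 - ε) * (n : ℝ) ≤ (maxDeg G : ℝ) := by
  obtain ⟨N, hN⟩ := eventually_atTop.1 (eventually_half_sub_mul_le_div_two hε)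
  refine ⟨N, fun n hn G _ hG => (hN n hn).trans ?_⟩
  exact_mod_cast div_two_le_maxDeg_of_ep_eq_exP (by omega) hG
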